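/- arXiv:2209.14511 — 4 statements merged into one kernel-verified Lean document; each statement's English description precedes it below -/
import Mathlib

section
/- Let ∂ and δ be two anticommuting square-zero linear endomorphisms of a vector space V (∂² = 0, δ² = 0, ∂δ + δ∂ = 0). Then the following are equivalent: (1) ker ∂ ∩ ker δ ∩ (im ∂ + im δ) = im ∂δ; (2) ker δ ∩ im ∂ = im ∂δ and ker ∂ ∩ im δ = im ∂δ. -/
/-- equivalence of two formulations of the ∂δ-lemma. -/
theorem stmt2 {K V : Type*} [Field K] [AddCommGroup V] [Module K V]
    (del δ : V →ₗ[K] V)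
    (h1 : del ∘ₗ del = 0) (h2 : δ ∘ₗ δ = 0)
    (h3 : del ∘ₗ δ + δ ∘ₗ del = 0) :
    (LinearMap.ker del ⊓ LinearMap.ker δ ⊓ (LinearMap.range del ⊔ LinearMap.range δ)
        = LinearMap.range (del ∘ₗ δ))
      ↔ (LinearMap.ker δ ⊓ LinearMap.range del = LinearMap.range (del ∘ₗ δ)
          ∧ LinearMap.ker del ⊓ LinearMap.range δ = LinearMap.range (del ∘ₗ δ)) := by
  have hdd : ∀ v, del (del v) = 0 := fun v => by
    simpa using LinearMap.congr_fun h1 v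
  have hδδ : ∀ v, δ (δ v) = 0 := fun v => by
    simpa using LinearMap.congr_fun h2 v
  have hanti : ∀ v, del (δ v) = - δ (del v) := fun v => by
    have := LinearMap.congr_fun h3 v
    simp only [LinearMap.add_apply, LinearMap.comp_apply, LinearMap.zero_apply] at this
    exact eq_neg_of_add_eq_zero_left this
  -- range (del ∘ₗ δ) is contained in everything
  have hr1 : LinearMap.range (del ∘ₗ δ) ≤ LinearMap.ker δ ⊓ LinearMap.range del := by
    rintro _ ⟨v, rfl⟩
    refine ⟨?_, ⟨δ v, rfl⟩⟩
    have : δ (del (δ v)) = 0 := by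
      have h := hanti (δ v)
      rw [hδδ, map_zero] at h
      simpa using h.symm
    simpa using this
  have hr2 : LinearMap.range (del ∘ₗ δ) ≤ LinearMap.ker del ⊓ LinearMap.range δ := by
    rintro _ ⟨v, rfl⟩
    refine ⟨by simpa using hdd (δ v), ?_⟩
    have h := hanti (δ v)
    rw [hδδ, map_zero] at h
    exact ⟨-(del v), by simp [LinearMap.comp_apply, hanti v]⟩
  have hr3 : LinearMap.range (del ∘ₗ δ) ≤
      LinearMap.ker del ⊓ LinearMap.ker δ ⊓ (LinearMap.range del ⊔ LinearMap.range δ) := by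
    rintro x hx
    exact ⟨⟨(hr2 hx).1, (hr1 hx).1⟩, Submodule.mem_sup_left (hr1 hx).2⟩
  constructor
  · intro h
    constructor
    · refine le_antisymm ?_ hr1
      rintro x ⟨hk, ⟨a, rfl⟩⟩
      rw [← h]
      exact ⟨⟨by simpa using hdd a, hk⟩, Submodule.mem_sup_left ⟨a, rfl⟩⟩
    · refine le_antisymm ?_ hr2
      rintro x ⟨hk, ⟨b, rfl⟩⟩
      rw [← h]
      exact ⟨⟨hk, by simpa using hδδ b⟩, Submodule.mem_sup_right ⟨b, rfl⟩⟩
  · rintro ⟨ha, hb⟩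
    refine le_antisymm ?_ hr3
    rintro x ⟨⟨hk1, hk2⟩, hsup⟩
    obtain ⟨_, ⟨a, rfl⟩, _, ⟨b, rfl⟩, rfl⟩ := Submodule.mem_sup.mp hsup
    have hka : δ (del a) = 0 := by
      have hx : δ (del a + δ b) = 0 := hk2
      rw [map_add, hδδ, add_zero] at hx
      exact hx
    have hkb : del (δ b) = 0 := by
      have hx : del (del a + δ b) = 0 := hk1
      rw [map_add, hdd, zero_add] at hx
      exact hx
    have h1' : del a ∈ LinearMap.range (del ∘ₗ δ) := ha ▸ ⟨hka, ⟨a, rfl⟩⟩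
    have h2' : δ b ∈ LinearMap.range (del ∘ₗ δ) := hb ▸ ⟨hkb, ⟨b, rfl⟩⟩
    exact Submodule.add_mem _ h1' h2'
end

section
/- Let ∂ and δ be anticommuting square-zero endomorphisms of a vector space V satisfying the ∂δ-lemma in the form: ker δ ∩ im ∂ = im ∂δ and ker ∂ ∩ im δ = im ∂δ. Then the inclusion of complexes (ker ∂, δ) ↪ (V, δ) induces an injective map on δ-cohomology: if x ∈ ker ∂ ∩ ker δ and x ∈ im δ (in V), then x ∈ δ(ker ∂). -/
/-- injectivity of the map induced by (ker ∂, δ) ↪ (V, δ) on δ-cohomology. -/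
theorem stmt3 {K V : Type*} [Field K] [AddCommGroup V] [Module K V]
    (del δ : V →ₗ[K] V)
    (h1 : del ∘ₗ del = 0) (h2 : δ ∘ₗ δ = 0)
    (h3 : del ∘ₗ δ + δ ∘ₗ del = 0)
    (hl1 : LinearMap.ker δ ⊓ LinearMap.range del = LinearMap.range (del ∘ₗ δ))
    (hl2 : LinearMap.ker del ⊓ LinearMap.range δ = LinearMap.range (del ∘ₗ δ)) :
    ∀ x : V, del x = 0 → δ x = 0 → x ∈ LinearMap.range δ →
      ∃ y : V, del y = 0 ∧ δ y = x := by
  intro x hdx hδx hrange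
  have hx : x ∈ LinearMap.range (del ∘ₗ δ) := by
    rw [← hl2]
    exact ⟨hdx, hrange⟩
  obtain ⟨z, hz⟩ := hx
  simp only [LinearMap.coe_comp, Function.comp_apply] at hz
  have hanti : del (δ z) + δ (del z) = 0 := by
    have := congrArg (fun f => f z) h3
    simpa using this
  have hdd : del (del z) = 0 := by
    have := congrArg (fun f => f z) h1
    simpa using this
  refine ⟨-(del z), by simp [hdd], ?_⟩
  rw [map_neg]
  rw [hz] at hanti
  have : δ (del z) = -x := by rw [eq_neg_iff_add_eq_zero, add_comm]; exact hanti
  rw [this, neg_neg]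
end

section
/- Let ∂ and δ be anticommuting square-zero endomorphisms of a vector space V satisfying ker δ ∩ im ∂ = im ∂δ and ker ∂ ∩ im δ = im ∂δ. Then the inclusion (ker ∂, δ) ↪ (V, δ) induces a surjective map on δ-cohomology: for every x with δx = 0, there exists y ∈ ker ∂ with δy = 0 and x - y ∈ im δ. -/
/-- surjectivity of the map induced by (ker ∂, δ) ↪ (V, δ) on δ-cohomology. -/
theorem stmt4 {K V : Type*} [Field K] [AddCommGroup V] [Module K V]
    (del δ : V →ₗ[K] V)
    (h1 : del ∘ₗ del = 0) (h2 : δ ∘ₗ δ = 0)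
    (h3 : del ∘ₗ δ + δ ∘ₗ del = 0)
    (hl1 : LinearMap.ker δ ⊓ LinearMap.range del = LinearMap.range (del ∘ₗ δ))
    (hl2 : LinearMap.ker del ⊓ LinearMap.range δ = LinearMap.range (del ∘ₗ δ)) :
    ∀ x : V, δ x = 0 →
      ∃ y : V, del y = 0 ∧ δ y = 0 ∧ x - y ∈ LinearMap.range δ := by
  intro x hx
  have hanti : ∀ v, del (δ v) + δ (del v) = 0 := fun v =>
    congrFun (congrArg DFunLike.coe h3) v
  have hmem : del x ∈ LinearMap.ker δ ⊓ LinearMap.range del := by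
    constructor
    · have := hanti x
      simp [hx] at this
      simpa [LinearMap.mem_ker] using this
    · exact ⟨x, rfl⟩
  rw [hl1] at hmem
  obtain ⟨z, hz⟩ := hmem
  refine ⟨x - δ z, ?_, ?_, z, by abel⟩
  · rw [LinearMap.comp_apply] at hz
    simp [map_sub, hz]
  · have hδδ : δ (δ z) = 0 := congrFun (congrArg DFunLike.coe h2) z
    simp [map_sub, hx, hδδ]
end

section
/- Let ∂ and δ be anticommuting square-zero endomorphisms of a vector space V satisfying ker δ ∩ im ∂ = im ∂δ and ker ∂ ∩ im δ = im ∂δ. Then the projection (ker ∂, δ) → (H_∂(V) := ker∂/im∂, 0) induces an isomorphism in cohomology; concretely: (i) if x ∈ im ∂ and δx = 0 then x ∈ δ(ker ∂) (injectivity), and (ii) for every x with ∂x = 0 there exists y with ∂y = 0, δy = 0, and x - y ∈ im ∂ (surjectivity). -/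
/-- the projection (ker ∂, δ) → (ker∂/im∂, 0) is a quasi-isomorphism:
(i) injectivity and (ii) surjectivity on cohomology. -/
theorem stmt5 {K V : Type*} [Field K] [AddCommGroup V] [Module K V]
    (del δ : V →ₗ[K] V)
    (h1 : del ∘ₗ del = 0) (h2 : δ ∘ₗ δ = 0)
    (h3 : del ∘ₗ δ + δ ∘ₗ del = 0)
    (hl1 : LinearMap.ker δ ⊓ LinearMap.range del = LinearMap.range (del ∘ₗ δ))
    (hl2 : LinearMap.ker del ⊓ LinearMap.range δ = LinearMap.range (del ∘ₗ δ)) :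
    (∀ x : V, x ∈ LinearMap.range del → δ x = 0 →
        ∃ y : V, del y = 0 ∧ δ y = x)
    ∧ (∀ x : V, del x = 0 →
        ∃ y : V, del y = 0 ∧ δ y = 0 ∧ x - y ∈ LinearMap.range del) := by
  have hdd : ∀ v : V, del (del v) = 0 := fun v => DFunLike.congr_fun h1 v
  have hδδ : ∀ v : V, δ (δ v) = 0 := fun v => DFunLike.congr_fun h2 v
  have hanti : ∀ v : V, del (δ v) + δ (del v) = 0 := fun v => DFunLike.congr_fun h3 v
  constructor
  · intro x hx hδx
    have hmem : x ∈ LinearMap.range (del ∘ₗ δ) := by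
      rw [← hl1]; exact ⟨hδx, hx⟩
    obtain ⟨z, hz⟩ := hmem
    refine ⟨-(del z), by simp [hdd], ?_⟩
    have := hanti z
    simp only [LinearMap.coe_comp, Function.comp_apply] at hz
    rw [map_neg, neg_eq_iff_add_eq_zero, ← hz]
    rw [add_comm] at this
    exact this
  · intro x hx
    have hmemker : del (δ x) = 0 := by
      have := hanti x
      rw [hx, map_zero, add_zero] at this
      exact this
    have hmem : δ x ∈ LinearMap.range (del ∘ₗ δ) := by
      rw [← hl2]; exact ⟨hmemker, ⟨x, rfl⟩⟩
    obtain ⟨w, hw⟩ := hmem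
    simp only [LinearMap.coe_comp, Function.comp_apply] at hw
    refine ⟨x + del w, by simp [hx, hdd], ?_, ?_⟩
    · have := hanti w
      rw [map_add, ← hw]
      exact this
    · exact ⟨-w, by simp⟩
end
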